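/- arXiv:1705.06811 — 4 statements merged into one kernel-verified Lean document; each statement's English description precedes it below -/
import Mathlib

section
/- Let (M,d) be a bounded separable metric space that is c-strongly concave for some c > 0. Then there exists δ > 0 such that for every norm ‖·‖ on ℓ∞ satisfying ‖x‖ ≤ ‖x‖∞ ≤ (1+δ)‖x‖ for all x ∈ ℓ∞, the metric space (M,d) embeds isometrically into (ℓ∞, ‖·‖): there is a map f : M → ℓ∞ with ‖f(x) - f(y)‖ = d(x,y) for all x, y ∈ M. -/
/-!
Strong concavity keeps distinct points at distance at least `c` (after shrinking `c` if `M` has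
only two points), so `M` is discrete, hence countable, and `ℓ∞(M)` sits isometrically in `ℓ∞`.
Enumerate `M`. A point `x` goes to the vector of `ℓ∞(M)` whose coordinate at a later point `z` is
`d(x, z)`, at `x` is `c / 2`, and at an earlier point `y` is `d(x, y) + c / 2 + g_x(y)` with a
knob `g_x(y) ∈ [0, c / 16]`. For `y` earlier than `x`, the difference of the two vectors peaks at
`y` with value `d(x, y) + g_x(y)`, every other coordinate being smaller by at least `c / 4` (this
is where strong concavity enters). A norm `N` that is `(1 + δ)`-close to the sup norm is, by
convexity, increasing with slope at least `1 / 2` in the peak coordinate, and moves by at most a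
quarter of any perturbation of the other coordinates. So for each earlier `y` exactly one knob
value gives `N = d(x, y)`, and it depends `1/2`-Lipschitz on the other knobs of `x`: Banach's
fixed point theorem gives all knobs of `x` at once, and recursion along the enumeration gives
the embedding.
-/

open scoped ENNReal lp

namespace Seminorm

variable {E : Type*} [AddCommGroup E] [Module ℝ E] (q : Seminorm ℝ E)

theorem add_mul_div_le_apply_add_smul {y v : E} {a η d m : ℝ} (ha : 0 < a) (hη : 0 ≤ η)
    (hd : d ≤ q y) (hm : q (y - a • v) ≤ m) : d + (d - m) * η / a ≤ q (y + η • v) := by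
  have hy : (a + η) • y = a • (y + η • v) + η • (y - a • v) := by module
  have hconv : (a + η) * q y ≤ a * q (y + η • v) + η * q (y - a • v) := by
    have := map_add_le_add q (a • (y + η • v)) (η • (y - a • v))
    rwa [← hy, map_smul_eq_mul, map_smul_eq_mul, map_smul_eq_mul, Real.norm_of_nonneg ha.le,
      Real.norm_of_nonneg hη, Real.norm_of_nonneg (by positivity)] at this
  rw [add_div' _ _ _ ha.ne', div_le_iff₀ ha]
  nlinarith [mul_le_mul_of_nonneg_left hd (by positivity : 0 ≤ a + η),
    mul_le_mul_of_nonneg_left hm hη]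

theorem apply_add_smul_le {x v : E} {t B : ℝ} (ht₀ : 0 ≤ t) (ht₁ : t ≤ 1)
    (hB : q (x + v) ≤ B) : q (x + t • v) ≤ q x + t * (B - q x) := by
  have hconv := q.convexOn.2 (Set.mem_univ x) (Set.mem_univ (x + v)) (sub_nonneg.2 ht₁) ht₀
    (sub_add_cancel 1 t)
  have hx : (1 - t) • x + t • (x + v) = x + t • v := by module
  rw [hx, smul_eq_mul, smul_eq_mul] at hconv
  nlinarith

end Seminorm

theorem norm_extend_apply_le {α β : Type*} (ι : α ↪ β) (v : ℓ^∞(α, ℝ)) (b : β) :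
    ‖Function.extend ι v 0 b‖ ≤ ‖v‖ := by
  by_cases hb : ∃ a, ι a = b
  · obtain ⟨a, rfl⟩ := hb
    rw [ι.injective.extend_apply]
    exact lp.norm_apply_le_norm ENNReal.top_ne_zero v a
  · rw [Function.extend_apply' _ _ _ hb, Pi.zero_apply, norm_zero]
    exact norm_nonneg v

theorem memℓp_extend {α β : Type*} (ι : α ↪ β) (v : ℓ^∞(α, ℝ)) :
    Memℓp (Function.extend ι v 0) ∞ :=
  memℓp_infty_iff.2 ⟨‖v‖, by rintro _ ⟨b, rfl⟩; exact norm_extend_apply_le ι v b⟩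

noncomputable def lpInftyExtend {α β : Type*} (ι : α ↪ β) : ℓ^∞(α, ℝ) →ₗᵢ[ℝ] ℓ^∞(β, ℝ) where
  toFun v := ⟨Function.extend ι v 0, memℓp_extend ι v⟩
  map_add' v w := lp.ext <| by
    show Function.extend ι (⇑v + ⇑w) 0 = Function.extend ι v 0 + Function.extend ι w 0
    rw [← Function.extend_add, add_zero]
  map_smul' a v := lp.ext <| by
    show Function.extend ι (a • ⇑v) 0 = a • Function.extend ι v 0
    rw [← Function.extend_smul, smul_zero]
  norm_map' v := by
    refine le_antisymm (lp.norm_le_of_forall_le (norm_nonneg v) (norm_extend_apply_le ι v))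
      (lp.norm_le_of_forall_le (norm_nonneg _) fun a => ?_)
    simpa [ι.injective.extend_apply] using lp.norm_apply_le_norm ENNReal.top_ne_zero
      (⟨_, memℓp_extend ι v⟩ : ℓ^∞(β, ℝ)) (ι a)

section StronglyConcave

variable {M : Type*} [MetricSpace M] {c : ℝ}

theorem abs_dist_sub_dist_le_of_concave
    (hconc : ∀ x y z : M, x ≠ y → y ≠ z → x ≠ z → c ≤ dist x y + dist y z - dist x z)
    {x y z : M} (hxy : x ≠ y) (hzx : z ≠ x) (hzy : z ≠ y) :
    |dist x z - dist y z| ≤ dist x y - c := by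
  rw [abs_sub_le_iff]
  constructor
  · linarith [hconc x y z hxy hzy.symm hzx.symm]
  · linarith [hconc y x z hxy.symm hzx.symm hzy.symm, dist_comm x y]

theorem le_dist_of_concave
    (hconc : ∀ x y z : M, x ≠ y → y ≠ z → x ≠ z → c ≤ dist x y + dist y z - dist x z)
    {x y z : M} (hxy : x ≠ y) (hzx : z ≠ x) (hzy : z ≠ y) : c ≤ dist x y := by
  linarith [hconc z x y hzx hxy hzy, hconc z y x hzy hxy.symm hzx, dist_comm x y]

theorem exists_separated_of_concave (hc : 0 < c)
    (hconc : ∀ x y z : M, x ≠ y → y ≠ z → x ≠ z → c ≤ dist x y + dist y z - dist x z) :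
    ∃ c' > 0, (∀ x y : M, x ≠ y → c' ≤ dist x y) ∧
      ∀ x y z : M, x ≠ y → z ≠ x → z ≠ y → |dist x z - dist y z| ≤ dist x y - c' := by
  by_cases hsep : ∀ x y : M, x ≠ y → c ≤ dist x y
  · exact ⟨c, hc, hsep, fun x y z => abs_dist_sub_dist_le_of_concave hconc⟩
  -- Some pair is closer than `c`, which leaves no room for a third point.
  push Not at hsep
  obtain ⟨a, b, hab, hlt⟩ := hsep
  have hpair : ∀ z, z = a ∨ z = b := fun z => by
    by_contra! h
    exact hlt.not_ge (le_dist_of_concave hconc hab h.1 h.2)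
  refine ⟨dist a b, dist_pos.2 hab, fun x y hxy => ?_, fun x y z hxy hzx hzy => ?_⟩
  · rcases hpair x with rfl | rfl <;> rcases hpair y with rfl | rfl <;> simp_all [dist_comm]
  · rcases hpair x with rfl | rfl <;> rcases hpair y with rfl | rfl <;>
      rcases hpair z with rfl | rfl <;> simp_all

end StronglyConcave

section Peak

variable {α : Type*} [DecidableEq α]

def IsPeak (γ : ℝ) (V : ℓ^∞(α, ℝ)) (i : α) : Prop :=
  γ ≤ V i ∧ ∀ j ≠ i, |V j| + γ ≤ V i

variable {q : Seminorm ℝ ℓ^∞(α, ℝ)} {δ γ S : ℝ} {V V' : ℓ^∞(α, ℝ)} {i : α}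

theorem IsPeak.norm_add_smul_single (hV : IsPeak γ V i) {r : ℝ} (hr : -γ ≤ r) :
    ‖V + r • lp.single ∞ i 1‖ = V i + r := by
  have hcoord : ∀ j, (V + r • lp.single ∞ i 1 : ℓ^∞(α, ℝ)) j =
      V j + r * (Pi.single i (1 : ℝ) : α → ℝ) j := fun j => rfl
  apply le_antisymm
  · refine lp.norm_le_of_forall_le (by linarith [hV.1]) fun j => ?_
    rw [hcoord, Real.norm_eq_abs]
    rcases eq_or_ne j i with rfl | hj
    · rw [Pi.single_eq_same, mul_one, abs_of_nonneg (by linarith [hV.1])]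
    · rw [Pi.single_eq_of_ne hj, mul_zero, add_zero]
      linarith [hV.2 j hj]
  · have := lp.norm_apply_le_norm ENNReal.top_ne_zero (V + r • lp.single ∞ i 1) i
    rw [hcoord, Pi.single_eq_same, mul_one, Real.norm_eq_abs] at this
    exact (le_abs_self _).trans this

theorem IsPeak.apply_le_seminorm_add_smul_single (hV : IsPeak γ V i) (hγ : 0 ≤ γ)
    (hq' : ∀ v, ‖v‖ ≤ (1 + δ) * q v) (hδ₀ : 0 ≤ δ) (hs : δ * V i ≤ S) :
    V i ≤ q (V + S • lp.single ∞ i 1) := by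
  have hS : 0 ≤ S := le_trans (mul_nonneg hδ₀ (hγ.trans hV.1)) hs
  have h := hq' (V + S • lp.single ∞ i 1)
  rw [hV.norm_add_smul_single (by linarith)] at h
  nlinarith

theorem IsPeak.exists_seminorm_add_smul_single_eq (hV : IsPeak γ V i) (hγ : 0 ≤ γ)
    (hq : ∀ v, q v ≤ ‖v‖) (hq' : ∀ v, ‖v‖ ≤ (1 + δ) * q v) (hδ₀ : 0 ≤ δ) (hS : δ * V i ≤ S) :
    ∃ r ∈ Set.Icc 0 S, q (V + r • lp.single ∞ i 1) = V i := by
  have hS0 : 0 ≤ S := le_trans (mul_nonneg hδ₀ (hγ.trans hV.1)) hS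
  have hcont : Continuous fun r : ℝ => q (V + r • lp.single ∞ i 1) :=
    (Seminorm.continuous_of_le (q := normSeminorm ℝ _) continuous_norm
      (Seminorm.le_def.2 hq)).comp (by fun_prop)
  have h0 : q (V + (0 : ℝ) • lp.single ∞ i 1) ≤ V i := by
    simpa using (hq _).trans_eq (hV.norm_add_smul_single (neg_nonpos.2 hγ))
  exact intermediate_value_Icc hS0 hcont.continuousOn
    ⟨h0, hV.apply_le_seminorm_add_smul_single hγ hq' hδ₀ hS⟩

theorem IsPeak.add_half_le_seminorm (hV : IsPeak γ V i) (hγ : 0 < γ) (hq : ∀ v, q v ≤ ‖v‖)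
    {r : ℝ} (hr : r ∈ Set.Icc 0 γ) (hroot : V i ≤ q (V + r • lp.single ∞ i 1))
    {η : ℝ} (hη : 0 ≤ η) : V i + η / 2 ≤ q (V + (r + η) • lp.single ∞ i 1) := by
  have hfar : q (V + r • lp.single ∞ i 1 - (r + γ) • lp.single ∞ i 1) ≤ V i - γ := by
    have hV_sub : V + r • lp.single ∞ i 1 - (r + γ) • lp.single ∞ i 1 =
        V + (-γ) • lp.single ∞ i 1 := by module
    rw [hV_sub, sub_eq_add_neg, ← hV.norm_add_smul_single le_rfl]
    exact hq _
  have hslope := q.add_mul_div_le_apply_add_smul (by linarith [hr.1]) hη hroot hfar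
  rw [add_assoc, ← add_smul] at hslope
  have hhalf : η / 2 ≤ (V i - (V i - γ)) * η / (r + γ) := by
    rw [sub_sub_cancel, le_div_iff₀ (by linarith [hr.1])]
    nlinarith [hr.2]
  linarith

theorem IsPeak.seminorm_add_smul_single_le (hV : IsPeak γ V i) (hγ : 0 < γ)
    (hq : ∀ v, q v ≤ ‖v‖) (hq' : ∀ v, ‖v‖ ≤ (1 + δ) * q v) (hδ₀ : 0 ≤ δ)
    (hV' : V' i = V i) {Δ : ℝ} (hΔ : ∀ j, |V' j - V j| ≤ Δ) (hΔγ : Δ ≤ γ)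
    {s ε : ℝ} (hs : 0 ≤ s) (hε : δ * (V i + s) ≤ ε) :
    q (V' + s • lp.single ∞ i 1) ≤ q (V + s • lp.single ∞ i 1) + ε * Δ / γ := by
  set x := V + s • lp.single ∞ i 1
  have hx : ‖x‖ = V i + s := hV.norm_add_smul_single (by linarith)
  have hslack : ‖x‖ - q x ≤ ε := by
    have := hq' x
    nlinarith [hq x]
  rcases ((abs_nonneg _).trans (hΔ i)).eq_or_lt with rfl | hΔ0
  · have hVV : V' = V := lp.ext <| funext fun j => sub_eq_zero.1 <| abs_nonpos_iff.1 (hΔ j)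
    simp [hVV, x]
  -- `V' - V` vanishes at the peak, so a step of sup norm `γ` along it stays in the ball of
  -- radius `‖x‖`; convexity then bounds the gain of `q` by the slack `‖x‖ - q x`.
  set v := (γ / Δ) • (V' - V)
  have hv : q (x + v) ≤ ‖x‖ := by
    refine (hq _).trans (lp.norm_le_of_forall_le (norm_nonneg _) fun j => ?_)
    have hcoord : (x + v : ℓ^∞(α, ℝ)) j =
        V j + s * (Pi.single i (1 : ℝ) : α → ℝ) j + γ / Δ * (V' j - V j) := rfl
    rw [hcoord, Real.norm_eq_abs, hx]
    rcases eq_or_ne j i with rfl | hj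
    · rw [hV', sub_self, mul_zero, add_zero, Pi.single_eq_same, mul_one,
        abs_of_nonneg (by linarith [hV.1])]
    · rw [Pi.single_eq_of_ne hj, mul_zero, add_zero]
      have hpert : |γ / Δ * (V' j - V j)| ≤ γ := by
        rw [abs_mul, abs_of_pos (by positivity), div_mul_eq_mul_div, div_le_iff₀ hΔ0]
        exact mul_le_mul_of_nonneg_left (hΔ j) hγ.le
      linarith [abs_add_le (V j) (γ / Δ * (V' j - V j)), hV.2 j hj]
  have hxv : V' + s • lp.single ∞ i 1 = x + (Δ / γ) • v := by
    have hcancel : Δ / γ * (γ / Δ) = 1 := by field_simp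
    simp only [x, v, smul_smul, hcancel, one_smul]
    abel
  rw [hxv]
  refine (q.apply_add_smul_le (by positivity) ((div_le_one hγ).2 hΔγ) hv).trans ?_
  have := mul_le_mul_of_nonneg_left hslack (by positivity : 0 ≤ Δ / γ)
  rw [show ε * Δ / γ = Δ / γ * ε by ring]
  linarith

theorem IsPeak.sub_le_of_seminorm_eq (hV : IsPeak γ V i) (hV' : IsPeak γ V' i) (hγ : 0 < γ)
    (hq : ∀ v, q v ≤ ‖v‖) (hq' : ∀ v, ‖v‖ ≤ (1 + δ) * q v) (hδ₀ : 0 ≤ δ)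
    (hVV' : V' i = V i) {Δ : ℝ} (hΔ : ∀ j, |V' j - V j| ≤ Δ) (hΔγ : Δ ≤ γ)
    {r r' ε : ℝ} (hr : r ∈ Set.Icc 0 γ) (hr' : 0 ≤ r') (hε : δ * (V i + r') ≤ ε)
    (hroot : q (V + r • lp.single ∞ i 1) = V i) (hroot' : q (V' + r' • lp.single ∞ i 1) = V i) :
    r' - r ≤ 2 * ε * Δ / γ := by
  have hε0 : 0 ≤ ε := le_trans (mul_nonneg hδ₀ (by linarith [hV.1])) hε
  have hΔ0 : 0 ≤ Δ := (abs_nonneg _).trans (hΔ i)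
  rcases le_total r' r with hle | hle
  · have : 0 ≤ 2 * ε * Δ / γ := by positivity
    linarith
  have hslope := hV.add_half_le_seminorm hγ hq hr hroot.ge (sub_nonneg.2 hle)
  rw [add_sub_cancel] at hslope
  have hcross := hV'.seminorm_add_smul_single_le hγ hq hq' hδ₀ hVV'.symm
    (fun j => (abs_sub_comm _ _).trans_le (hΔ j)) hΔγ hr' (hVV' ▸ hε)
  rw [hroot'] at hcross
  linarith [show 2 * ε * Δ / γ = 2 * (ε * Δ / γ) by ring]

theorem IsPeak.abs_sub_le_of_seminorm_eq (hV : IsPeak γ V i) (hV' : IsPeak γ V' i) (hγ : 0 < γ)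
    (hq : ∀ v, q v ≤ ‖v‖) (hq' : ∀ v, ‖v‖ ≤ (1 + δ) * q v) (hδ₀ : 0 ≤ δ)
    (hVV' : V' i = V i) {Δ : ℝ} (hΔ : ∀ j, |V' j - V j| ≤ Δ) (hΔγ : Δ ≤ γ)
    {r r' ε : ℝ} (hSγ : S ≤ γ) (hε : δ * (V i + S) ≤ ε) (hr : r ∈ Set.Icc 0 S)
    (hr' : r' ∈ Set.Icc 0 S) (hroot : q (V + r • lp.single ∞ i 1) = V i)
    (hroot' : q (V' + r' • lp.single ∞ i 1) = V' i) :
    |r - r'| ≤ 2 * ε * Δ / γ := by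
  have hεS : ∀ t ∈ Set.Icc 0 S, δ * (V i + t) ≤ ε := fun t ht =>
    le_trans (mul_le_mul_of_nonneg_left (by linarith [ht.2]) hδ₀) hε
  rw [abs_sub_le_iff]
  constructor
  · exact hV'.sub_le_of_seminorm_eq hV hγ hq hq' hδ₀ hVV'.symm
      (fun j => (abs_sub_comm _ _).trans_le (hΔ j)) hΔγ ⟨hr'.1, hr'.2.trans hSγ⟩ hr.1
      (hVV' ▸ hεS r hr) hroot' (hVV' ▸ hroot)
  · exact hV.sub_le_of_seminorm_eq hV' hγ hq hq' hδ₀ hVV' hΔ hΔγ ⟨hr.1, hr.2.trans hSγ⟩ hr'.1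
      (hεS r' hr') hroot (hVV' ▸ hroot')

end Peak

namespace ConcaveEmbedding

noncomputable section Profile

variable {M : Type*} (ι : M ↪ ℕ)

def earlier (x : M) : Finset M := (Finset.range (ι x)).preimage ι ι.injective.injOn

@[simp]
theorem mem_earlier {x z : M} : z ∈ earlier ι x ↔ ι z < ι x := by
  simp [earlier]

abbrev Knobs (S : ℝ) (x : M) : Type _ := earlier ι x → Set.Icc (0 : ℝ) S

variable [MetricSpace M] [DecidableEq M] [BoundedSpace M] (c : ℝ) {S : ℝ}

def profileFun (x : M) (g : Knobs ι S x) (z : M) : ℝ :=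
  if h : z ∈ earlier ι x then dist x z + c / 2 + g ⟨z, h⟩ else if z = x then c / 2 else dist x z

theorem memℓp_profileFun (x : M) (g : Knobs ι S x) : Memℓp (profileFun ι c x g) ∞ := by
  refine memℓp_infty_iff.2 ⟨Metric.diam (Set.univ : Set M) + |c| + |S|, ?_⟩
  rintro _ ⟨z, rfl⟩
  have hd : dist x z ≤ Metric.diam (Set.univ : Set M) :=
    Metric.dist_le_diam_of_mem (Bornology.isBounded_univ.2 ‹_›) (Set.mem_univ _) (Set.mem_univ _)
  have := neg_abs_le c
  have := le_abs_self c
  have := abs_nonneg S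
  have := dist_nonneg (x := x) (y := z)
  simp only [profileFun, Real.norm_eq_abs]
  split_ifs with h
  · have hg := (g ⟨z, h⟩).2
    exact abs_le.2 ⟨by linarith [hg.1], by linarith [hg.2, le_abs_self S]⟩
  · exact abs_le.2 ⟨by linarith, by linarith⟩
  · exact abs_le.2 ⟨by linarith, by linarith⟩

def profile (x : M) (g : Knobs ι S x) : ℓ^∞(M, ℝ) := ⟨profileFun ι c x g, memℓp_profileFun ι c x g⟩

theorem profile_apply (x : M) (g : Knobs ι S x) (z : M) :
    profile ι c x g z = profileFun ι c x g z := rfl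

variable {x y : M} (hy : y ∈ earlier ι x) (σ : Knobs ι S y)

def profileGap (g : Knobs ι S x) : ℓ^∞(M, ℝ) :=
  profile ι c x g - profile ι c y σ - (g ⟨y, hy⟩ : ℝ) • lp.single ∞ y 1

theorem profileGap_apply (g : Knobs ι S x) (z : M) : profileGap ι c hy σ g z =
    profileFun ι c x g z - profileFun ι c y σ z - g ⟨y, hy⟩ * (Pi.single y (1 : ℝ) : M → ℝ) z :=
  rfl

theorem profileGap_apply_self (g : Knobs ι S x) : profileGap ι c hy σ g y = dist x y := by
  have hyy : y ∉ earlier ι y := by simp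
  rw [profileGap_apply, Pi.single_eq_same, profileFun, dif_pos hy, profileFun, dif_neg hyy,
    if_pos rfl]
  ring

theorem isPeak_profileGap (hc : 0 ≤ c) (hS : S ≤ c / 4) (hsep : ∀ x y : M, x ≠ y → c ≤ dist x y)
    (hconc : ∀ x y z : M, x ≠ y → z ≠ x → z ≠ y → |dist x z - dist y z| ≤ dist x y - c)
    (g : Knobs ι S x) : IsPeak (c / 4) (profileGap ι c hy σ g) y := by
  have hxy : x ≠ y := by rintro rfl; simp at hy
  have hd := hsep x y hxy
  rw [IsPeak, profileGap_apply_self]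
  refine ⟨by linarith, fun z hzy => ?_⟩
  rw [profileGap_apply, Pi.single_eq_of_ne hzy, mul_zero, sub_zero]
  have hearlier : z ∈ earlier ι y → z ∈ earlier ι x := fun h => by
    simp only [mem_earlier] at h hy ⊢
    exact h.trans hy
  rw [← le_sub_iff_add_le, abs_le]
  simp only [profileFun]
  split_ifs with hex hey hzx hey hey
  · have hzx : z ≠ x := by rintro rfl; simp at hex
    obtain ⟨h₁, h₂⟩ := abs_le.1 (hconc x y z hxy hzx hzy)
    constructor <;> linarith [(g ⟨z, hex⟩).2.1, (g ⟨z, hex⟩).2.2, (σ ⟨z, hey⟩).2.1,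
      (σ ⟨z, hey⟩).2.2]
  · have hzx : z ≠ x := by rintro rfl; simp at hex
    obtain ⟨h₁, h₂⟩ := abs_le.1 (hconc x y z hxy hzx hzy)
    constructor <;> linarith [(g ⟨z, hex⟩).2.1, (g ⟨z, hex⟩).2.2]
  · exact absurd (hearlier hey) hex
  · rw [hzx, dist_comm y x]
    constructor <;> linarith
  · exact absurd (hearlier hey) hex
  · obtain ⟨h₁, h₂⟩ := abs_le.1 (hconc x y z hxy hzx hzy)
    constructor <;> linarith

theorem abs_profileGap_sub_le (g g' : Knobs ι S x) (z : M) :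
    |profileGap ι c hy σ g' z - profileGap ι c hy σ g z| ≤ dist g' g := by
  have hdist : ∀ w : earlier ι x, |(g' w : ℝ) - g w| ≤ dist g' g := fun w => by
    rw [← Real.dist_eq, ← Subtype.dist_eq]
    exact dist_le_pi_dist g' g w
  rw [profileGap_apply, profileGap_apply]
  rcases eq_or_ne z y with rfl | hzy
  · generalize profileFun ι c z σ z = P
    simp only [profileFun, dif_pos hy, Pi.single_eq_same]
    rw [abs_le]
    constructor <;> linarith [dist_nonneg (x := g') (y := g)]
  · simp only [Pi.single_eq_of_ne hzy, mul_zero, sub_zero, sub_sub_sub_cancel_right, profileFun]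
    split_ifs with hz
    · convert hdist ⟨z, hz⟩ using 2
      ring
    all_goals simp only [sub_self, abs_zero, dist_nonneg]

theorem profile_sub_profile (g : Knobs ι S x) :
    profile ι c x g - profile ι c y σ = profileGap ι c hy σ g + (g ⟨y, hy⟩ : ℝ) • lp.single ∞ y 1 :=
  (sub_add_cancel _ _).symm

end Profile

section Knobs

variable {M : Type*} [MetricSpace M] [DecidableEq M] [BoundedSpace M] (ι : M ↪ ℕ) {c : ℝ}
  {q : Seminorm ℝ ℓ^∞(M, ℝ)} {δ : ℝ}

theorem exists_knobs_seminorm_profile_sub_eq (hc : 0 < c)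
    (hsep : ∀ x y : M, x ≠ y → c ≤ dist x y)
    (hconc : ∀ x y z : M, x ≠ y → z ≠ x → z ≠ y → |dist x z - dist y z| ≤ dist x y - c)
    (hq : ∀ v, q v ≤ ‖v‖) (hq' : ∀ v, ‖v‖ ≤ (1 + δ) * q v) (hδ₀ : 0 ≤ δ)
    (hδ : ∀ x y : M, δ * (dist x y + c / 16) ≤ c / 16)
    (x : M) (σ : ∀ y, ι y < ι x → Knobs ι (c / 16) y) :
    ∃ g : Knobs ι (c / 16) x, ∀ y (hy : ι y < ι x),
      q (profile ι c x g - profile ι c y (σ y hy)) = dist x y := by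
  set gap := fun (g : Knobs ι (c / 16) x) (y : earlier ι x) =>
    profileGap ι c y.2 (σ y ((mem_earlier ι).1 y.2)) g
  have hpeak : ∀ g y, IsPeak (c / 4) (gap g y) y := fun g y =>
    isPeak_profileGap ι c _ _ hc.le (by linarith) hsep hconc g
  have hheight : ∀ g y, gap g y y = dist x y := fun g y => profileGap_apply_self ι c _ _ g
  have hroot : ∀ g y, ∃ r ∈ Set.Icc 0 (c / 16),
      q (gap g y + r • lp.single ∞ (y : M) 1) = gap g y y := fun g y =>
    (hpeak g y).exists_seminorm_add_smul_single_eq (by positivity) hq hq' hδ₀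
      (by rw [hheight]; nlinarith [hδ x y])
  choose r hr hr_eq using hroot
  set T : Knobs ι (c / 16) x → Knobs ι (c / 16) x := fun g y => ⟨r g y, hr g y⟩
  have hT : ContractingWith 2⁻¹ T := by
    refine ⟨by norm_num, LipschitzWith.of_dist_le_mul fun g g' => ?_⟩
    have hΔ : dist g g' ≤ c / 16 := (dist_pi_le_iff (by positivity)).2 fun y => by
      rw [Subtype.dist_eq]
      simpa using Real.dist_le_of_mem_Icc (g y).2 (g' y).2
    refine (dist_pi_le_iff (by positivity)).2 fun y => ?_
    rw [Subtype.dist_eq, Real.dist_eq]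
    have := (hpeak g y).abs_sub_le_of_seminorm_eq (ε := c / 16) (hpeak g' y) (by positivity)
      hq hq' hδ₀ (by rw [hheight, hheight])
      (fun z => (abs_profileGap_sub_le ι c _ _ g g' z).trans_eq (dist_comm _ _))
      (by linarith) (by linarith) (by rw [hheight]; exact hδ x y)
      (hr g y) (hr g' y) (hr_eq g y) (hr_eq g' y)
    refine this.trans_eq ?_
    push_cast
    field_simp
    ring
  have : Nonempty (Knobs ι (c / 16) x) := ⟨fun _ => ⟨0, le_rfl, by positivity⟩⟩
  obtain ⟨g, hg⟩ : ∃ g, T g = g := ⟨_, hT.fixedPoint_isFixedPt⟩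
  refine ⟨g, fun y hy => ?_⟩
  have hy' := (mem_earlier ι).2 hy
  have hgy : (g ⟨y, hy'⟩ : ℝ) = r g ⟨y, hy'⟩ := congrArg (fun h => (h ⟨y, hy'⟩ : ℝ)) hg.symm
  rw [profile_sub_profile ι c hy', hgy]
  exact (hr_eq g ⟨y, hy'⟩).trans (hheight g _)

end Knobs

section Construction

variable {M : Type*} [MetricSpace M] [DecidableEq M] [BoundedSpace M] [Countable M] {c : ℝ}
  {q : Seminorm ℝ ℓ^∞(M, ℝ)} {δ : ℝ}

theorem exists_seminorm_sub_eq_dist (hc : 0 < c)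
    (hsep : ∀ x y : M, x ≠ y → c ≤ dist x y)
    (hconc : ∀ x y z : M, x ≠ y → z ≠ x → z ≠ y → |dist x z - dist y z| ≤ dist x y - c)
    (hq : ∀ v, q v ≤ ‖v‖) (hq' : ∀ v, ‖v‖ ≤ (1 + δ) * q v) (hδ₀ : 0 ≤ δ)
    (hδ : ∀ x y : M, δ * (dist x y + c / 16) ≤ c / 16) :
    ∃ f : M → ℓ^∞(M, ℝ), ∀ x y, q (f x - f y) = dist x y := by
  obtain ⟨ι, hι⟩ := exists_injective_nat M
  let ι : M ↪ ℕ := ⟨ι, hι⟩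
  choose step hstep using exists_knobs_seminorm_profile_sub_eq ι hc hsep hconc hq hq' hδ₀ hδ
  have hwf := InvImage.wf ι wellFounded_lt
  set K : ∀ x, Knobs ι (c / 16) x := hwf.fix step
  have hlt : ∀ x y, ι y < ι x → q (profile ι c x (K x) - profile ι c y (K y)) = dist x y :=
    fun x y h => by
      rw [show K x = step x fun y _ => K y from hwf.fix_eq step x]
      exact hstep x _ y h
  refine ⟨fun x => profile ι c x (K x), fun x y => ?_⟩
  rcases lt_trichotomy (ι x) (ι y) with h | h | h
  · rw [← map_neg_eq_map, neg_sub, dist_comm]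
    exact hlt y x h
  · rw [ι.injective h, sub_self, map_zero, dist_self]
  · exact hlt x y h

end Construction

end ConcaveEmbedding

/-- For a bounded separable strongly concave metric space `(M, d)`, there is `δ > 0`
such that `(M, d)` embeds isometrically into `ℓ∞` equipped with any norm `N`
satisfying `N x ≤ ‖x‖∞ ≤ (1 + δ) * N x` for all `x`. -/
theorem embeds_into_renormed_linfty (M : Type*) [MetricSpace M]
    [TopologicalSpace.SeparableSpace M]
    (hbdd : ∃ k : ℝ, 0 < k ∧ ∀ x y : M, dist x y ≤ k)
    (hconc : ∃ c : ℝ, 0 < c ∧ ∀ x y z : M, x ≠ y → y ≠ z → x ≠ z →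
      c ≤ dist x y + dist y z - dist x z) :
    ∃ δ : ℝ, 0 < δ ∧
      ∀ N : lp (fun _ : ℕ => ℝ) ∞ → ℝ,
        (∀ x, N x = 0 ↔ x = 0) →
        (∀ (a : ℝ) (x), N (a • x) = |a| * N x) →
        (∀ x y, N (x + y) ≤ N x + N y) →
        (∀ x, N x ≤ ‖x‖ ∧ ‖x‖ ≤ (1 + δ) * N x) →
        ∃ f : M → lp (fun _ : ℕ => ℝ) ∞,
          ∀ x y : M, N (f x - f y) = dist x y := by
  classical
  obtain ⟨k, hk, hbdd⟩ := hbdd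
  obtain ⟨c₀, hc₀, hconc₀⟩ := hconc
  obtain ⟨c, hc, hsep, hconc⟩ := exists_separated_of_concave hc₀ hconc₀
  have : BoundedSpace M :=
    Bornology.isBounded_univ.1 (Metric.isBounded_iff.2 ⟨k, fun x _ y _ => hbdd x y⟩)
  have : DiscreteTopology M := DiscreteTopology.of_forall_le_dist hc hsep
  have : Countable M := TopologicalSpace.separableSpace_iff_countable.1 ‹_›
  obtain ⟨ι, hι⟩ := exists_injective_nat M
  refine ⟨c / (16 * k + c), by positivity, fun N _ hhom htri hN => ?_⟩
  set T := lpInftyExtend ⟨ι, hι⟩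
  set q := (Seminorm.of N htri fun a x => by rw [Real.norm_eq_abs]; exact hhom a x).comp
    T.toLinearMap
  have hδ : ∀ x y : M, c / (16 * k + c) * (dist x y + c / 16) ≤ c / 16 := fun x y => by
    rw [div_mul_eq_mul_div, div_le_iff₀ (by positivity)]
    nlinarith [hbdd x y]
  obtain ⟨f, hf⟩ := ConcaveEmbedding.exists_seminorm_sub_eq_dist (q := q) hc hsep hconc
    (fun v => (T.norm_map v).symm ▸ (hN (T v)).1) (fun v => (T.norm_map v) ▸ (hN (T v)).2)
    (by positivity) hδ
  exact ⟨fun x => T (f x), fun x y => by rw [← map_sub]; exact hf x y⟩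
end

section
/- Let (M,d) be a bounded countably infinite metric space. Then there exists an injective sequence (y_k) of points of M such that for every k, the sequence of real numbers n ↦ d(y_k, y_n) converges as n → ∞. Consequently, the Fréchet embedding of the subset N = {y_k : k ≥ 1} (relative to the enumeration (y_k)) takes values in the space c of convergent real sequences. -/
open Filter Topology

/-- Cantor's diagonal argument, packaged as sequential compactness of a countable product. -/
theorem exists_strictMono_forall_tendsto_of_mem_isCompact {ι E : Type*} [Countable ι]
    [TopologicalSpace E] [FirstCountableTopology E] {K : ι → Set E} (hK : ∀ i, IsCompact (K i))
    {F : ι → ℕ → E} (hF : ∀ i n, F i n ∈ K i) :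
    ∃ φ : ℕ → ℕ, StrictMono φ ∧ ∀ i, ∃ a ∈ K i, Tendsto (fun n => F i (φ n)) atTop (𝓝 a) := by
  obtain ⟨a, ha, φ, hφ, hlim⟩ :=
    (isCompact_univ_pi hK).tendsto_subseq (x := fun n i => F i n) fun n i _ => hF i n
  exact ⟨φ, hφ, fun i => ⟨a i, ha i trivial, tendsto_pi_nhds.1 hlim i⟩⟩

theorem exists_subsequence_frechet_in_c_general (M : Type*) [MetricSpace M]
    [Infinite M]
    (hbdd : ∃ k : ℝ, 0 < k ∧ ∀ x y : M, dist x y ≤ k) :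
    ∃ y : ℕ → M, Function.Injective y ∧
      ∀ k : ℕ, ∃ L : ℝ, Tendsto (fun n => dist (y k) (y n)) atTop (nhds L) := by
  obtain ⟨C, -, hC⟩ := hbdd
  let x := Infinite.natEmbedding M
  obtain ⟨φ, hφ, hlim⟩ := exists_strictMono_forall_tendsto_of_mem_isCompact
    (fun _ => isCompact_Icc) (F := fun k n => dist (x k) (x n)) (K := fun _ => Set.Icc 0 C)
    fun _ _ => ⟨dist_nonneg, hC _ _⟩
  exact ⟨x ∘ φ, x.injective.comp hφ.injective, fun k => (hlim (φ k)).imp fun _ h => h.2⟩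

/-- In a bounded countably infinite metric space there is an injective sequence
`(y k)` of points such that, for every `k`, the sequence `n ↦ d (y k) (y n)`
converges; hence the Fréchet embedding of `N = {y k}` (with respect to the
enumeration `(y k)`) takes values in the space `c` of convergent sequences. -/
theorem exists_subsequence_frechet_in_c (M : Type*) [MetricSpace M]
    [Countable M] [Infinite M]
    (hbdd : ∃ k : ℝ, 0 < k ∧ ∀ x y : M, dist x y ≤ k) :
    ∃ y : ℕ → M, Function.Injective y ∧
      ∀ k : ℕ, ∃ L : ℝ, Tendsto (fun n => dist (y k) (y n)) atTop (nhds L) :=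
  exists_subsequence_frechet_in_c_general M hbdd
end

section
/- Let (M,d) be a bounded metric space that is c-strongly concave for some c > 0, let (x_n)_{n≥1} be an injective enumeration of points of M, and let ε : ℕ × ℕ → ℝ be a function with 0 ≤ ε(m,n) ≤ c for n < m and ε(m,n) = 0 for n ≥ m. For each n define p_n ∈ ℓ∞ by p_n(k) = d(x_n, x_k) + ε(n,k). Then for all n < m one has ‖p_n - p_m‖∞ = d(x_n, x_m) + ε(m,n). -/
open scoped ENNReal

/-!
The perturbation `ε i` vanishes on `k ≥ i`, and on `k < i` its size `≤ c` is absorbed by the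
concavity gap of the pairwise distinct triple `x i, x j, x k`; with the triangle inequality this
gives `d(x i, x k) + ε i k ≤ d(x i, x j) + d(x j, x k)` whenever `k < i → k ≠ j`. Taking
`(i, j) = (n, m)` and `(m, n)` bounds `|p n k - p m k|` by `d(x n, x m) + ε m n`, and the
coordinate `k = n` attains the bound.
-/

open Function

def IsStronglyConcave (M : Type*) [PseudoMetricSpace M] (c : ℝ) : Prop :=
  ∀ x y z : M, x ≠ y → y ≠ z → x ≠ z → c ≤ dist x y + dist y z - dist x z

theorem lp.norm_eq_of_forall_norm_le_of_norm_eq {ι : Type*} {E : ι → Type*}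
    [∀ i, NormedAddCommGroup (E i)] (f : lp E ∞) {C : ℝ} (hle : ∀ i, ‖f i‖ ≤ C) (i₀ : ι)
    (heq : ‖f i₀‖ = C) : ‖f‖ = C :=
  le_antisymm (lp.norm_le_of_forall_le (heq ▸ norm_nonneg _) hle)
    (heq ▸ lp.norm_apply_le_norm ENNReal.top_ne_zero f i₀)

section PerturbedFrechet

variable {M : Type*} [PseudoMetricSpace M] {x : ℕ → M} {ε : ℕ → ℕ → ℝ} {c : ℝ}

def perturbedFrechet (x : ℕ → M) (ε : ℕ → ℕ → ℝ) (n k : ℕ) : ℝ :=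
  dist (x n) (x k) + ε n k

theorem memℓp_perturbedFrechet {K : ℝ} (hK : ∀ y z : M, dist y z ≤ K)
    (hε0 : ∀ m n, m ≤ n → ε m n = 0) (n : ℕ) : Memℓp (perturbedFrechet x ε n) ∞ := by
  have hdist : Memℓp (fun k => dist (x n) (x k)) ∞ := by
    refine memℓp_infty ⟨K, ?_⟩
    rintro - ⟨k, rfl⟩
    simpa only [Real.norm_eq_abs, abs_dist] using hK (x n) (x k)
  have hsupport : {k | ε n k ≠ 0}.Finite :=
    (Set.finite_lt_nat n).subset fun k hk => not_le.1 fun hnk => hk (hε0 n k hnk)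
  exact hdist.add ((memℓp_zero hsupport).of_exponent_ge zero_le)

theorem perturbedFrechet_le_dist_add_dist (hconc : IsStronglyConcave M c) (hx : Injective x)
    (hεc : ∀ m n, n < m → ε m n ≤ c) (hε0 : ∀ m n, m ≤ n → ε m n = 0) {i j k : ℕ}
    (hij : i ≠ j) (hkj : k < i → k ≠ j) :
    perturbedFrechet x ε i k ≤ dist (x i) (x j) + dist (x j) (x k) := by
  unfold perturbedFrechet
  rcases lt_or_ge k i with hki | hik
  · have hgap := hconc (x i) (x j) (x k) (hx.ne hij) (hx.ne (hkj hki).symm) (hx.ne hki.ne')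
    linarith [hεc i k hki]
  · rw [hε0 i k hik, add_zero]
    exact dist_triangle _ _ _

theorem abs_perturbedFrechet_sub_le (hconc : IsStronglyConcave M c) (hx : Injective x)
    (hεc : ∀ m n, n < m → ε m n ≤ c) (hε0 : ∀ m n, m ≤ n → ε m n = 0)
    (hεnonneg : ∀ m n, 0 ≤ ε m n) {n m : ℕ} (hnm : n < m) (k : ℕ) :
    |perturbedFrechet x ε n k - perturbedFrechet x ε m k| ≤ dist (x n) (x m) + ε m n := by
  rw [abs_sub_le_iff]
  constructor
  · have h := perturbedFrechet_le_dist_add_dist hconc hx hεc hε0 hnm.ne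
      (k := k) fun hkn => (hkn.trans hnm).ne
    unfold perturbedFrechet at *
    linarith [hεnonneg m k, hεnonneg m n]
  · rcases eq_or_ne k n with rfl | hkn
    · simp only [perturbedFrechet, dist_self, hε0 k k le_rfl, dist_comm (x m) (x k)]
      linarith
    · have h := perturbedFrechet_le_dist_add_dist hconc hx hεc hε0 hnm.ne' fun _ => hkn
      unfold perturbedFrechet at *
      linarith [dist_comm (x m) (x n), hεnonneg n k, hεnonneg m n]

end PerturbedFrechet

theorem perturbed_frechet_norm_general (M : Type*) [MetricSpace M]
    (hbdd : ∃ k : ℝ, 0 < k ∧ ∀ x y : M, dist x y ≤ k)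
    (c : ℝ)
    (hconc : ∀ x y z : M, x ≠ y → y ≠ z → x ≠ z →
      c ≤ dist x y + dist y z - dist x z)
    (x : ℕ → M) (hx : Function.Injective x)
    (ε : ℕ → ℕ → ℝ)
    (hε1 : ∀ m n : ℕ, n < m → 0 ≤ ε m n ∧ ε m n ≤ c)
    (hε2 : ∀ m n : ℕ, m ≤ n → ε m n = 0) :
    ∃ p : ℕ → lp (fun _ : ℕ => ℝ) ∞,
      (∀ n k : ℕ, p n k = dist (x n) (x k) + ε n k) ∧
      ∀ n m : ℕ, n < m → ‖p n - p m‖ = dist (x n) (x m) + ε m n := by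
  obtain ⟨K, -, hK⟩ := hbdd
  have hεc m n (h : n < m) : ε m n ≤ c := (hε1 m n h).2
  have hεnonneg m n : 0 ≤ ε m n :=
    (lt_or_ge n m).elim (fun h => (hε1 m n h).1) fun h => (hε2 m n h).ge
  refine ⟨fun n => ⟨perturbedFrechet x ε n, memℓp_perturbedFrechet hK hε2 n⟩,
    fun n k => rfl, fun n m hnm => ?_⟩
  refine lp.norm_eq_of_forall_norm_le_of_norm_eq _
    (abs_perturbedFrechet_sub_le hconc hx hεc hε2 hεnonneg hnm) n ?_
  change |perturbedFrechet x ε n n - perturbedFrechet x ε m n| = _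
  rw [perturbedFrechet, perturbedFrechet, dist_self, hε2 n n le_rfl, dist_comm (x m) (x n),
    zero_add, zero_sub, abs_neg, abs_of_nonneg (add_nonneg dist_nonneg (hεnonneg m n))]

/-- Let `(M, d)` be a bounded `c`-strongly concave metric space, `(x n)` an injective
enumeration of points of `M`, and `ε : ℕ × ℕ → ℝ` with `0 ≤ ε m n ≤ c` for `n < m`
and `ε m n = 0` for `n ≥ m`. Define `p n ∈ ℓ∞` by `p n k = d (x n) (x k) + ε n k`.
Then for `n < m`, `‖p n - p m‖∞ = d (x n) (x m) + ε m n`. -/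
theorem perturbed_frechet_norm (M : Type*) [MetricSpace M]
    (hbdd : ∃ k : ℝ, 0 < k ∧ ∀ x y : M, dist x y ≤ k)
    (c : ℝ) (hc : 0 < c)
    (hconc : ∀ x y z : M, x ≠ y → y ≠ z → x ≠ z →
      c ≤ dist x y + dist y z - dist x z)
    (x : ℕ → M) (hx : Function.Injective x)
    (ε : ℕ → ℕ → ℝ)
    (hε1 : ∀ m n : ℕ, n < m → 0 ≤ ε m n ∧ ε m n ≤ c)
    (hε2 : ∀ m n : ℕ, m ≤ n → ε m n = 0) :
    ∃ p : ℕ → lp (fun _ : ℕ => ℝ) ∞,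
      (∀ n k : ℕ, p n k = dist (x n) (x k) + ε n k) ∧
      ∀ n m : ℕ, n < m → ‖p n - p m‖ = dist (x n) (x m) + ε m n :=
  perturbed_frechet_norm_general M hbdd c hconc x hx ε hε1 hε2
end

section
/- Let X be a strictly convex real normed space. Then the unit sphere S_X of X, with the metric induced by the norm, is a concave metric space: for any pairwise distinct points x, y, z ∈ S_X one has ‖x - z‖ < ‖x - y‖ + ‖y - z‖. -/
/-! If `y` lay on the segment `[x, z]` with `y ≠ x, z`, strict convexity would put `y` strictly
inside the ball through `x` and `z`; so three distinct points of a sphere never realise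
equality in the triangle inequality. -/

open Metric

theorem dist_lt_dist_add_dist_of_mem_sphere {V P : Type*} [NormedAddCommGroup V]
    [NormedSpace ℝ V] [StrictConvexSpace ℝ V] [MetricSpace P] [NormedAddTorsor V P]
    {p a b c : P} {r : ℝ} (ha : a ∈ sphere p r) (hb : b ∈ sphere p r) (hc : c ∈ sphere p r)
    (hab : a ≠ b) (hbc : b ≠ c) : dist a c < dist a b + dist b c := by
  rw [dist_lt_dist_add_dist_iff]
  intro hwbtw
  have hlt := Sbtw.dist_lt_max_dist p ⟨hwbtw, hab.symm, hbc⟩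
  rw [mem_sphere.1 ha, mem_sphere.1 hb, mem_sphere.1 hc, max_self] at hlt
  exact hlt.false

/-- In a strictly convex real normed space, the unit sphere with the norm metric is a
concave metric space: the triangle inequality is strict for pairwise distinct points
of the unit sphere. -/
theorem unitSphere_concave {X : Type*} [NormedAddCommGroup X] [NormedSpace ℝ X]
    (hsc : ∀ x y : X, ‖x‖ = 1 → ‖y‖ = 1 → x ≠ y → ‖x + y‖ < 2) :
    ∀ x y z : X, ‖x‖ = 1 → ‖y‖ = 1 → ‖z‖ = 1 →
      x ≠ y → y ≠ z → x ≠ z → ‖x - z‖ < ‖x - y‖ + ‖y - z‖ := by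
  intro x y z hx hy hz hxy hyz _
  have : StrictConvexSpace ℝ X :=
    StrictConvexSpace.of_norm_add_ne_two fun u v hu hv huv => (hsc u v hu hv huv).ne
  simpa only [dist_eq_norm] using
    dist_lt_dist_add_dist_of_mem_sphere (p := 0) (mem_sphere_zero_iff_norm.2 hx)
      (mem_sphere_zero_iff_norm.2 hy) (mem_sphere_zero_iff_norm.2 hz) hxy hyz
end
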